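/- arXiv:math/0212275 — 3 statements merged into one kernel-verified Lean document; each statement's English description precedes it below -/
import Mathlib

section
/- Maximum version of the Hunt–Dyson formula: For every m ∈ ℕ (m ≥ 1) and all real numbers κ_1, …, κ_m, one has ∑_{τ ∈ S_m} [ P_m(κ_τ) − P_{m−1}(κ_τ) ] = (m−1)! · max(0, κ_1 + ⋯ + κ_m). -/
/-!
Rotating `κ` cyclically by `r` turns its partial sums into `s (r + j) - s r`, where `s` is the
sequence of partial sums of the periodic extension of `κ`; it satisfies `s (k + m) = s k + S`
with `S = ∑ κ`. If `S ≥ 0`, then `P_m - P_{m-1}` of the `r`-th rotation equals `W (r + 1) - W r`,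
where `W r` is the maximum of `s` over the window `[r, r + m - 1]`, so summing over the `m`
rotations telescopes to `W m - W 0 = S`. Applying this to every `κ ∘ τ` and using that
`τ ↦ τ * ρ` permutes `S_m` for each rotation `ρ` gives `m • ∑_τ = m! • S`. If `S ≤ 0`, every
term vanishes, because `P_m = max P_{m-1} S` and `P_{m-1} ≥ 0`.
-/

open Finset

/-- `partialMax m κ p` is `max(0, κ₁, κ₁+κ₂, …, κ₁+⋯+κ_p)`,
the maximum of `0` and the first `p` partial sums of `κ`. -/
noncomputable def partialMax (m : ℕ) (κ : Fin m → ℝ) (p : ℕ) : ℝ :=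
  (Finset.range (p + 1)).sup' Finset.nonempty_range_add_one
    (fun i => ∑ t : Fin m, if (t : ℕ) < i then κ t else 0)

open Fin.NatCast

theorem partialMax_nonneg {m : ℕ} (κ : Fin m → ℝ) (p : ℕ) : 0 ≤ partialMax m κ p :=
  le_sup'_of_le _ (mem_range.2 p.succ_pos) (by simp)

theorem partialMax_succ {m : ℕ} (κ : Fin m → ℝ) (p : ℕ) :
    partialMax m κ (p + 1)
      = max (partialMax m κ p) (∑ t : Fin m, if (t : ℕ) < p + 1 then κ t else 0) := by
  rw [partialMax, partialMax, sup'_congr _ (range_add_one (n := p + 1)) fun _ _ => rfl,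
    sup'_insert nonempty_range_add_one, max_comm]

theorem partialMax_self_eq_of_sum_nonpos {n : ℕ} (κ : Fin (n + 1) → ℝ) (hκ : ∑ i, κ i ≤ 0) :
    partialMax (n + 1) κ (n + 1) = partialMax (n + 1) κ n := by
  rw [partialMax_succ, max_eq_left]
  simp only [Fin.is_lt, if_true]
  exact hκ.trans (partialMax_nonneg κ n)

noncomputable def windowMax (s : ℕ → ℝ) (p r : ℕ) : ℝ :=
  (range (p + 1)).sup' nonempty_range_add_one fun j => s (r + j)

section windowMax

variable {s : ℕ → ℝ} {S : ℝ} {N : ℕ}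

theorem windowMax_succ (s : ℕ → ℝ) (p r : ℕ) :
    windowMax s (p + 1) r = max (s r) (windowMax s p (r + 1)) := by
  simp only [windowMax]
  rw [sup'_congr _ (range_add_one' (p + 1)) fun _ _ => rfl,
    sup'_insert (map_nonempty.2 nonempty_range_add_one), sup'_map]
  congr 1
  exact sup'_congr _ rfl fun j _ => by
    show s (r + (j + 1)) = s (r + 1 + j)
    rw [Nat.add_right_comm]; rfl

theorem windowMax_add_period (hper : ∀ k, s (k + N) = s k + S) (p r : ℕ) :
    windowMax s p (r + N) = windowMax s p r + S := by
  simp only [windowMax, sup'_add]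
  exact sup'_congr _ rfl fun j _ => by rw [← hper, Nat.add_right_comm]

theorem windowMax_succ_of_period {n : ℕ} (hS : 0 ≤ S) (hper : ∀ k, s (k + (n + 1)) = s k + S)
    (r : ℕ) : windowMax s (n + 1) r = windowMax s n (r + 1) := by
  refine (windowMax_succ s n r).trans (max_eq_right ?_)
  calc s r ≤ s (r + (n + 1)) := by rw [hper]; linarith
    _ = s (r + 1 + n) := by rw [Nat.add_right_comm, Nat.add_assoc]
    _ ≤ windowMax s n (r + 1) := le_sup' (fun j => s (r + 1 + j)) (self_mem_range_succ n)

theorem sum_range_windowMax_succ_sub {n : ℕ} (hS : 0 ≤ S)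
    (hper : ∀ k, s (k + (n + 1)) = s k + S) :
    ∑ r ∈ range (n + 1), (windowMax s (n + 1) r - windowMax s n r) = S := by
  simp_rw [windowMax_succ_of_period hS hper]
  rw [sum_range_sub (windowMax s n), ← Nat.zero_add (n + 1), windowMax_add_period hper]
  ring

end windowMax

theorem Fin.sum_ite_val_lt {n j : ℕ} (c : Fin (n + 1) → ℝ) (hj : j ≤ n + 1) :
    ∑ t : Fin (n + 1), (if (t : ℕ) < j then c t else 0) = ∑ i ∈ range j, c i :=
  calc ∑ t : Fin (n + 1), (if (t : ℕ) < j then c t else 0)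
      = ∑ i ∈ range (n + 1), if i < j then c i else 0 :=
        (sum_congr rfl fun t _ => by rw [Fin.cast_val_eq_self]).trans
          (Fin.sum_univ_eq_sum_range (fun i => if i < j then c i else 0) _)
    _ = ∑ i ∈ range j, c i := by
      rw [← sum_filter]
      congr 1
      ext i
      simp only [mem_filter, mem_range]
      omega

-- The cast `ℕ → Fin (n + 1)` reduces mod `n + 1`, so these are the partial sums of the periodic
-- extension of `b`.
def cyclicPartialSum {n : ℕ} (b : Fin (n + 1) → ℝ) (k : ℕ) : ℝ :=
  ∑ i ∈ range k, b i

section cyclicPartialSum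

variable {n : ℕ} (b : Fin (n + 1) → ℝ)

theorem cyclicPartialSum_add (k j : ℕ) :
    cyclicPartialSum b (k + j) = cyclicPartialSum b k + ∑ i ∈ range j, b (i + k) := by
  simp only [cyclicPartialSum, sum_range_add, Nat.cast_add, add_comm (k : Fin (n + 1))]

theorem cyclicPartialSum_add_period (k : ℕ) :
    cyclicPartialSum b (k + (n + 1)) = cyclicPartialSum b k + ∑ i, b i := by
  rw [cyclicPartialSum_add, ← Fin.sum_univ_eq_sum_range (fun i => b (i + k))]
  simp only [Fin.cast_val_eq_self]
  exact congrArg _ (Equiv.sum_comp (Equiv.addRight (k : Fin (n + 1))) b)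

theorem partialMax_rotate {p : ℕ} (r : ℕ) (hp : p ≤ n + 1) :
    partialMax (n + 1) (fun i => b (i + r)) p
      = windowMax (cyclicPartialSum b) p r - cyclicPartialSum b r := by
  rw [partialMax, windowMax, sub_eq_add_neg, sup'_add]
  refine sup'_congr _ rfl fun j hj => ?_
  rw [Fin.sum_ite_val_lt _ (by rw [mem_range] at hj; omega), cyclicPartialSum_add]
  ring

theorem sum_range_partialMax_rotate_sub (hb : 0 ≤ ∑ i, b i) :
    ∑ r ∈ range (n + 1), (partialMax (n + 1) (fun i => b (i + r)) (n + 1)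
      - partialMax (n + 1) (fun i => b (i + r)) n) = ∑ i, b i := by
  rw [← sum_range_windowMax_succ_sub hb (cyclicPartialSum_add_period b)]
  refine sum_congr rfl fun r _ => ?_
  rw [partialMax_rotate b r le_rfl, partialMax_rotate b r (Nat.le_succ n)]
  ring

end cyclicPartialSum

theorem card_smul_sum_eq_of_forall_sum_mul_eq {G ι M : Type*} [Group G] [Fintype G]
    [AddCommMonoid M] (s : Finset ι) (ρ : ι → G) (F : G → M) (c : M)
    (h : ∀ g, ∑ i ∈ s, F (g * ρ i) = c) :
    s.card • ∑ g, F g = Fintype.card G • c :=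
  calc s.card • ∑ g, F g = ∑ i ∈ s, ∑ g, F (g * ρ i) := by
        rw [← sum_const]
        exact sum_congr rfl fun i _ => (Equiv.sum_comp (Equiv.mulRight (ρ i)) F).symm
    _ = ∑ g, ∑ i ∈ s, F (g * ρ i) := sum_comm
    _ = Fintype.card G • c := by rw [sum_congr rfl fun g _ => h g, sum_const, card_univ]

/-- The maximum version of the Hunt–Dyson formula. -/
theorem hunt_dyson_max (m : ℕ) (hm : 1 ≤ m) (κ : Fin m → ℝ) :
    ∑ τ : Equiv.Perm (Fin m),
      (partialMax m (fun i => κ (τ i)) m - partialMax m (fun i => κ (τ i)) (m - 1))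
    = ((m - 1).factorial : ℝ) * max 0 (∑ i : Fin m, κ i) := by
  obtain ⟨n, rfl⟩ : ∃ n, m = n + 1 := ⟨m - 1, by omega⟩
  simp only [Nat.add_sub_cancel]
  have hsum : ∀ τ : Equiv.Perm (Fin (n + 1)), ∑ i, κ (τ i) = ∑ i, κ i :=
    fun τ => Equiv.sum_comp τ κ
  rcases le_total (∑ i, κ i) 0 with hS | hS
  · rw [max_eq_left hS, mul_zero]
    refine sum_eq_zero fun τ _ => ?_
    rw [partialMax_self_eq_of_sum_nonpos _ ((hsum τ).trans_le hS), sub_self]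
  · rw [max_eq_right hS]
    have hrot := card_smul_sum_eq_of_forall_sum_mul_eq (range (n + 1))
      (fun r : ℕ => Equiv.addRight (r : Fin (n + 1)))
      (fun τ => partialMax (n + 1) (fun i => κ (τ i)) (n + 1)
        - partialMax (n + 1) (fun i => κ (τ i)) n) (∑ i, κ i)
      fun τ => (sum_range_partialMax_rotate_sub (κ ∘ τ) (hS.trans_eq (hsum τ).symm)).trans
        (hsum τ)
    rw [card_range, Fintype.card_perm, Fintype.card_fin, Nat.factorial_succ, mul_smul,
      nsmul_eq_mul, nsmul_eq_mul, nsmul_eq_mul] at hrot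
    exact mul_left_cancel₀ (by positivity) hrot
end

section
/- Two-factor merging identity for the maps Φ_j: Fix p ∈ ℕ and complex numbers x_1, …, x_{p−1}, y_1, …, y_{p−1}. Then ∑_{(a,b): a,b ≥ 1, a+b = p} ∑_{α=1}^{a} ∑_{β=1}^{b} (1/(α! β!)) · Φ_α[z^a](x_1,…,x_α) · Φ_β[z^b](y_1,…,y_β) = ∑_{α ≥ 1} ∑_{β ≥ 1} (1/(α! β!)) · Φ_{α+β}[z^p](x_1,…,x_α, y_1,…,y_β), where the sums on the right-hand side terminate because Φ_{α+β}[z^p] = 0 whenever α+β > p. -/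
open Finset

/-- Compositions of `m` into `j` positive parts. -/
def compositions (j m : ℕ) : Finset (Fin j → ℕ) :=
  (Finset.Nat.antidiagonalTuple j m).filter fun k => ∀ i, 1 ≤ k i

/-- `Phi j m x = Φ_j[z^m](x₁, …, x_j) = ∑_{l₁+⋯+l_j = m, lᵢ ≥ 1} ∏ᵢ xᵢ^{lᵢ}/lᵢ`,
with `Φ_j[z^m] = 0` when `m < j` (the sum over compositions is then empty). -/
noncomputable def Phi (j m : ℕ) (x : ℕ → ℂ) : ℂ :=
  ∑ l ∈ compositions j m, ∏ i : Fin j, x (i : ℕ) ^ (l i) / (l i : ℂ)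

/-!
Cutting a composition of `p` into `α + β` positive parts after its first `α` parts gives a
composition of some `a` into `α` parts and one of `b = p - a` into `β` parts, bijectively. Hence
`Φ_{α+β}[z^p](x, y) = ∑_{a+b=p} Φ_α[z^a](x) Φ_β[z^b](y)`. Weighting by `1/(α! β!)` and summing
over `α, β` gives the identity after exchanging the order of summation; the ranges of `α` and `β`
on the two sides match because `Φ_α[z^a] = 0` for `a < α`.
-/

@[simp]
lemma mem_compositions {j m : ℕ} {k : Fin j → ℕ} :
    k ∈ compositions j m ↔ ∑ i, k i = m ∧ ∀ i, 1 ≤ k i := by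
  simp [compositions, Finset.Nat.mem_antidiagonalTuple]

lemma compositions_eq_empty {j m : ℕ} (h : m < j) : compositions j m = ∅ := by
  refine eq_empty_of_forall_notMem fun k hk => ?_
  rw [mem_compositions] at hk
  have : j ≤ m := calc
    j = ∑ _i : Fin j, 1 := by simp
    _ ≤ ∑ i, k i := sum_le_sum fun i _ => hk.2 i
    _ = m := hk.1
  omega

lemma Phi_eq_zero_of_lt {j m : ℕ} (h : m < j) (x : ℕ → ℂ) : Phi j m x = 0 := by
  simp [Phi, compositions_eq_empty h]

lemma sum_compositions_add {M : Type*} [AddCommMonoid M] (α β m : ℕ)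
    (f : (Fin (α + β) → ℕ) → M) :
    ∑ l ∈ compositions (α + β) m, f l =
      ∑ ab ∈ antidiagonal m, ∑ l₁ ∈ compositions α ab.1, ∑ l₂ ∈ compositions β ab.2,
        f (Fin.append l₁ l₂) := by
  simp_rw [← sum_product', sum_sigma']
  symm
  refine sum_nbij' (fun z => Fin.append z.2.1 z.2.2)
    (fun l => ⟨(∑ i, l (Fin.castAdd β i), ∑ i, l (Fin.natAdd α i)),
      (fun i => l (Fin.castAdd β i), fun i => l (Fin.natAdd α i))⟩) ?_ ?_ ?_ ?_ (fun _ _ => rfl)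
  · rintro ⟨⟨a, b⟩, l₁, l₂⟩ hz
    simp only [mem_sigma, mem_product, HasAntidiagonal.mem_antidiagonal, mem_compositions] at hz ⊢
    obtain ⟨hab, ⟨hs₁, hl₁⟩, hs₂, hl₂⟩ := hz
    refine ⟨by simp [Fin.sum_univ_add, hs₁, hs₂, hab], Fin.addCases ?_ ?_⟩ <;> simp [hl₁, hl₂]
  · intro l hl
    simp only [mem_sigma, mem_product, HasAntidiagonal.mem_antidiagonal, mem_compositions,
      true_and] at hl ⊢
    exact ⟨by rw [← Fin.sum_univ_add, hl.1], fun i => hl.2 _, fun i => hl.2 _⟩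
  · rintro ⟨⟨a, b⟩, l₁, l₂⟩ hz
    simp only [mem_sigma, mem_product, HasAntidiagonal.mem_antidiagonal, mem_compositions] at hz
    obtain ⟨-, ⟨hs₁, -⟩, hs₂, -⟩ := hz
    simp [hs₁, hs₂]
  · intro l _
    exact Fin.append_castAdd_natAdd

lemma Phi_add (α β p : ℕ) (x y : ℕ → ℂ) :
    Phi (α + β) p (fun i => if i < α then x i else y (i - α)) =
      ∑ ab ∈ antidiagonal p, Phi α ab.1 x * Phi β ab.2 y := by
  unfold Phi
  rw [sum_compositions_add]
  refine sum_congr rfl fun ab _ => ?_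
  rw [sum_mul_sum]
  refine sum_congr rfl fun l₁ _ => sum_congr rfl fun l₂ _ => ?_
  rw [Fin.prod_univ_add]
  congr 1 <;> refine prod_congr rfl fun i _ => ?_ <;> simp

lemma sum_Icc_one_eq_of_eq_zero {M : Type*} [AddCommMonoid M] {a p : ℕ} (h : a ≤ p)
    {f : ℕ → M} (hf : ∀ α, a < α → f α = 0) :
    ∑ α ∈ Icc 1 a, f α = ∑ α ∈ Icc 1 p, f α :=
  sum_subset (Icc_subset_Icc_right h) fun α hα hα' => hf α <| by
    simp only [mem_Icc, not_and, not_le] at hα hα'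
    exact hα' hα.1

lemma sum_antidiagonal_eq_sum_Icc_ite {M : Type*} [AddCommMonoid M] (p : ℕ) (g : ℕ → ℕ → M)
    (hg₀ : ∀ b, g 0 b = 0) (hg₀' : ∀ a, g a 0 = 0) :
    ∑ ab ∈ antidiagonal p, g ab.1 ab.2 =
      ∑ a ∈ Icc 1 p, ∑ b ∈ Icc 1 p, if a + b = p then g a b else 0 := by
  rw [← sum_product', ← sum_filter]
  refine (sum_subset (fun ab hab => ?_) fun ab hab hab' => ?_).symm
  · simp only [mem_filter, mem_product, mem_Icc] at hab
    simpa using hab.2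
  · simp only [HasAntidiagonal.mem_antidiagonal] at hab
    simp only [mem_filter, mem_product, mem_Icc, not_and] at hab'
    obtain ⟨a, b⟩ := ab
    rcases Nat.eq_zero_or_pos a with rfl | ha
    · exact hg₀ b
    rcases Nat.eq_zero_or_pos b with rfl | hb
    · exact hg₀' a
    exact absurd hab (hab' ⟨⟨ha, by omega⟩, hb, by omega⟩)

/-- Two-factor merging identity for the maps `Φ_j`.  On the right-hand side the
sums over `α, β ≥ 1` terminate (terms with `α+β > p` vanish since
`Φ_{α+β}[z^p] = 0`), so they are written as the equal finite sums up to `p`. -/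
theorem phi_two_merge (p : ℕ) (x y : ℕ → ℂ) :
    ∑ a ∈ Finset.Icc 1 p, ∑ b ∈ Finset.Icc 1 p,
      (if a + b = p then
        ∑ α ∈ Finset.Icc 1 a, ∑ β ∈ Finset.Icc 1 b,
          (1 / ((α.factorial : ℂ) * (β.factorial : ℂ))) * (Phi α a x * Phi β b y)
      else 0)
    = ∑ α ∈ Finset.Icc 1 p, ∑ β ∈ Finset.Icc 1 p,
        (1 / ((α.factorial : ℂ) * (β.factorial : ℂ))) *
          Phi (α + β) p (fun i => if i < α then x i else y (i - α)) := by
  set c : ℕ → ℕ → ℂ := fun α β => 1 / ((α.factorial : ℂ) * (β.factorial : ℂ))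
  calc _ = ∑ ab ∈ antidiagonal p, ∑ α ∈ Icc 1 ab.1, ∑ β ∈ Icc 1 ab.2,
        c α β * (Phi α ab.1 x * Phi β ab.2 y) :=
        (sum_antidiagonal_eq_sum_Icc_ite p _ (fun _ => by simp) fun _ => by simp).symm
    _ = ∑ ab ∈ antidiagonal p, ∑ α ∈ Icc 1 p, ∑ β ∈ Icc 1 p,
        c α β * (Phi α ab.1 x * Phi β ab.2 y) := by
      refine sum_congr rfl fun ab hab => ?_
      have hab := HasAntidiagonal.mem_antidiagonal.1 hab
      rw [sum_Icc_one_eq_of_eq_zero (p := p) (by omega) fun α hα => by simp [Phi_eq_zero_of_lt hα]]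
      refine sum_congr rfl fun α _ => sum_Icc_one_eq_of_eq_zero (by omega) fun β hβ => ?_
      simp [Phi_eq_zero_of_lt hβ]
    _ = ∑ α ∈ Icc 1 p, ∑ β ∈ Icc 1 p, ∑ ab ∈ antidiagonal p,
        c α β * (Phi α ab.1 x * Phi β ab.2 y) := by
      rw [sum_comm]
      exact sum_congr rfl fun α _ => sum_comm
    _ = _ := by simp_rw [Phi_add, mul_sum, c]
end

section
/- Cauchy integral representation of complete homogeneous symmetric polynomials: Let j ∈ ℕ, j ≥ 1, let m ≥ 0 be an integer, let ξ_1, …, ξ_j be complex numbers, and let R > max_{1 ≤ k ≤ j} |ξ_k|. Then (1/(2πi)) ∮_{|ζ|=R} ζ^{j−1+m} / ∏_{k=1}^{j} (ζ − ξ_k) dζ = h_m(ξ_1, …, ξ_j), where the contour integral is taken counterclockwise over the circle of radius R centered at 0. -/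
/-!
Write `I_ξ(p) = ∮_{|ζ|=R} ζ^p / ∏ₖ (ζ - ξₖ) dζ` and `ξ' = (ξ₁, …, ξ_{j-1})` for the tail of
`ξ = (ξ₀, …, ξ_{j-1})`. Splitting `ζ^{p+1} = ζ^p (ζ - ξ₀) + ξ₀ ζ^p` gives
`I_ξ(p + 1) = I_ξ'(p) + ξ₀ I_ξ(p)`. When `p + 2 ≤ j` the integrand is holomorphic outside the
disc and `O(|ζ|⁻²)`, so pushing the contour to infinity shows `I_ξ(p) = 0`. Iterating the
recursion in the exponent expands `I_ξ(j - 1 + m)` as `∑_{a+b=m} ξ₀^a I_ξ'(j - 2 + b)`, which is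
the recursion `h_m(ξ) = ∑_{a+b=m} ξ₀^a h_b(ξ')`; for a single variable Cauchy's formula gives
`I(m) = 2πi ξ₀^m`.
-/

open Finset Metric Filter Bornology Real Topology

theorem Multiset.Nat.antidiagonalTuple_succ (k n : ℕ) :
    Multiset.Nat.antidiagonalTuple (k + 1) n =
      (Multiset.Nat.antidiagonal n).bind fun ab =>
        (Multiset.Nat.antidiagonalTuple k ab.2).map (Fin.cons ab.1) := by
  simp [Multiset.Nat.antidiagonalTuple, List.Nat.antidiagonalTuple, Multiset.Nat.antidiagonal,
    Multiset.coe_bind]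

theorem Finset.Nat.sum_antidiagonalTuple_succ {M : Type*} [AddCommMonoid M] (k n : ℕ)
    (f : (Fin (k + 1) → ℕ) → M) :
    ∑ l ∈ Nat.antidiagonalTuple (k + 1) n, f l =
      ∑ ab ∈ antidiagonal n, ∑ l ∈ Nat.antidiagonalTuple k ab.2, f (Fin.cons ab.1 l) := by
  simp only [Finset.sum, Nat.antidiagonalTuple, Multiset.Nat.antidiagonalTuple_succ,
    Multiset.map_bind, Multiset.sum_bind, Multiset.map_map]
  rfl

section CompleteHomogeneous

variable {A : Type*} [CommSemiring A]

def completeHomogeneous {j : ℕ} (m : ℕ) (ξ : Fin j → A) : A :=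
  ∑ l ∈ Nat.antidiagonalTuple j m, ∏ i, ξ i ^ l i

theorem completeHomogeneous_one (m : ℕ) (ξ : Fin 1 → A) :
    completeHomogeneous m ξ = ξ 0 ^ m := by
  simp [completeHomogeneous]

theorem completeHomogeneous_succ {j : ℕ} (m : ℕ) (ξ : Fin (j + 1) → A) :
    completeHomogeneous m ξ =
      ∑ ab ∈ antidiagonal m, ξ 0 ^ ab.1 * completeHomogeneous ab.2 (Fin.tail ξ) := by
  simp only [completeHomogeneous, Nat.sum_antidiagonalTuple_succ, Fin.prod_univ_succ,
    Fin.cons_zero, Fin.cons_succ, mul_sum]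
  rfl

end CompleteHomogeneous

theorem circleIntegral_eq_zero_of_tendsto_smul_cobounded {E : Type*} [NormedAddCommGroup E]
    [NormedSpace ℂ E] [CompleteSpace E] {f : ℂ → E} {c : ℂ} {R : ℝ} (hR : 0 < R)
    (hd : ∀ z ∉ ball c R, DifferentiableAt ℂ f z)
    (hf : Tendsto (fun z => (z - c) • f z) (cobounded ℂ) (𝓝 0)) :
    (∮ z in C(c, R), f z) = 0 := by
  have hsmall : ∀ ε > 0, ‖∮ z in C(c, R), f z‖ ≤ 2 * π * ε := by
    intro ε hε
    obtain ⟨r, -, hr⟩ := (hasBasis_cobounded_compl_closedBall c).eventually_iff.1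
      (hf.eventually (closedBall_mem_nhds 0 hε))
    set ρ := max R (r + 1)
    have hRρ : R ≤ ρ := le_max_left _ _
    have hρ : 0 < ρ := hR.trans_le hRρ
    rw [← Complex.circleIntegral_eq_of_differentiable_on_annulus_off_countable hR hRρ
      Set.countable_empty (fun z hz => (hd z hz.2).continuousAt.continuousWithinAt)
      (fun z hz => hd z fun h => hz.1.2 (ball_subset_closedBall h))]
    calc ‖∮ z in C(c, ρ), f z‖ ≤ 2 * π * ρ * (ε / ρ) := by
          refine circleIntegral.norm_integral_le_of_norm_le_const hρ.le fun z hz => ?_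
          rw [mem_sphere_iff_norm] at hz
          have hzr : z ∈ (closedBall c r)ᶜ := by
            rw [Set.mem_compl_iff, mem_closedBall, dist_eq_norm, hz]
            linarith [le_max_right R (r + 1)]
          have := hr hzr
          rw [dist_zero_right, norm_smul, hz] at this
          rwa [le_div_iff₀ hρ, mul_comm]
      _ = 2 * π * ε := by field_simp
  refine norm_le_zero_iff.1 (le_of_forall_pos_le_add fun ε hε => ?_)
  simpa [field] using hsmall (ε / (2 * π)) (by positivity)

theorem tendsto_pow_div_prod_sub_cobounded {ι : Type*} [Fintype ι] (ξ : ι → ℂ) {p : ℕ}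
    (hp : p < Fintype.card ι) :
    Tendsto (fun z => z ^ p / ∏ k, (z - ξ k)) (cobounded ℂ) (𝓝 0) := by
  have hratio (w : ℂ) : Tendsto (fun z => z / (z - w)) (cobounded ℂ) (𝓝 1) := by
    have h : Tendsto (fun z => 1 + w * (z - w)⁻¹) (cobounded ℂ) (𝓝 (1 + w * 0)) :=
      tendsto_const_nhds.add
        (tendsto_const_nhds.mul (tendsto_inv₀_cobounded.comp (tendsto_sub_const_cobounded w)))
    rw [mul_zero, add_zero] at h
    refine h.congr' ((eventually_ne_cobounded w).mono fun z hz => ?_)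
    field_simp [sub_ne_zero.2 hz]
    ring
  -- `z ^ p / ∏ (z - ξ k) = (∏ z / (z - ξ k)) * z⁻¹ ^ (card ι - p)`: factors tend to `1` and `0`
  obtain ⟨q, hq⟩ : ∃ q, Fintype.card ι = p + (q + 1) := ⟨Fintype.card ι - p - 1, by omega⟩
  have h : Tendsto (fun z => (∏ k, z / (z - ξ k)) * z⁻¹ ^ (q + 1)) (cobounded ℂ)
      (𝓝 ((∏ _k : ι, (1 : ℂ)) * 0 ^ (q + 1))) :=
    (tendsto_finsetProd _ fun k _ => hratio (ξ k)).mul (tendsto_inv₀_cobounded.pow _)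
  rw [zero_pow q.succ_ne_zero, mul_zero] at h
  refine h.congr' ((eventually_ne_cobounded 0).mono fun z hz => ?_)
  rw [prod_div_distrib, prod_const, card_univ, hq, inv_pow, pow_add]
  field_simp

section PowDivProd

variable {ι : Type*} [Fintype ι] {ξ : ι → ℂ} {R : ℝ}

theorem prod_sub_ne_zero_of_norm_lt {z : ℂ} (h : ∀ k, ‖ξ k‖ < ‖z‖) : ∏ k, (z - ξ k) ≠ 0 :=
  prod_ne_zero_iff.2 fun k _ => sub_ne_zero.2 fun hz => (h k).ne (hz ▸ rfl)

theorem differentiableAt_pow_div_prod_sub (p : ℕ) {z : ℂ} (h : ∀ k, ‖ξ k‖ < ‖z‖) :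
    DifferentiableAt ℂ (fun ζ => ζ ^ p / ∏ k, (ζ - ξ k)) z :=
  (differentiableAt_pow p).div (DifferentiableAt.fun_finsetProd fun k _ => by fun_prop)
    (prod_sub_ne_zero_of_norm_lt h)

theorem circleIntegrable_pow_div_prod_sub (p : ℕ) (hR : ∀ k, ‖ξ k‖ < R) :
    CircleIntegrable (fun ζ => ζ ^ p / ∏ k, (ζ - ξ k)) 0 R :=
  ContinuousOn.circleIntegrable' fun _ hz =>
    (differentiableAt_pow_div_prod_sub p fun k => (hR k).trans_le
      ((le_abs_self R).trans (mem_sphere_zero_iff_norm.1 hz).ge)).continuousAt.continuousWithinAt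

theorem circleIntegral_pow_div_prod_sub_eq_zero {p : ℕ} (hp : p + 1 < Fintype.card ι)
    (hR : ∀ k, ‖ξ k‖ < R) : (∮ ζ in C(0, R), ζ ^ p / ∏ k, (ζ - ξ k)) = 0 := by
  obtain ⟨k⟩ : Nonempty ι := Fintype.card_pos_iff.1 (by omega)
  refine circleIntegral_eq_zero_of_tendsto_smul_cobounded ((norm_nonneg _).trans_lt (hR k))
    (fun _ hz => differentiableAt_pow_div_prod_sub p fun k => ?_) ?_
  · simpa using (hR k).trans_le (not_lt.1 (by simpa using hz))
  · simpa only [sub_zero, smul_eq_mul, mul_div_assoc', ← pow_succ']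
      using tendsto_pow_div_prod_sub_cobounded ξ hp

end PowDivProd

theorem circleIntegral_pow_div_sub {w : ℂ} {R : ℝ} (m : ℕ) (hw : ‖w‖ < R) :
    (∮ ζ in C(0, R), ζ ^ m / (ζ - w)) = 2 * π * Complex.I * w ^ m := by
  simpa [div_eq_inv_mul] using (differentiable_pow m).differentiableOn.circleIntegral_sub_inv_smul
    (mem_ball_zero_iff.2 hw)

theorem circleIntegral_pow_succ_div_prod_sub {j : ℕ} (p : ℕ) {ξ : Fin (j + 1) → ℂ} {R : ℝ}
    (hR : ∀ k, ‖ξ k‖ < R) :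
    (∮ ζ in C(0, R), ζ ^ (p + 1) / ∏ k, (ζ - ξ k)) =
      (∮ ζ in C(0, R), ζ ^ p / ∏ k, (ζ - Fin.tail ξ k)) +
        ξ 0 * ∮ ζ in C(0, R), ζ ^ p / ∏ k, (ζ - ξ k) := by
  have hR0 : 0 ≤ R := (norm_nonneg _).trans (hR 0).le
  have hint : CircleIntegrable (fun ζ => ξ 0 * (ζ ^ p / ∏ k, (ζ - ξ k))) 0 R :=
    (circleIntegrable_pow_div_prod_sub p hR).const_mul _
  rw [← circleIntegral.integral_const_mul, ← circleIntegral.integral_add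
    (circleIntegrable_pow_div_prod_sub (ξ := Fin.tail ξ) p fun k => hR k.succ) hint]
  refine circleIntegral.integral_congr hR0 fun z hz => ?_
  have hz' : ∀ k, ‖ξ k‖ < ‖z‖ := fun k => (hR k).trans_eq (mem_sphere_zero_iff_norm.1 hz).symm
  have h0 : z - ξ 0 ≠ 0 := by simpa using prod_sub_ne_zero_of_norm_lt (fun _ : Fin 1 => hz' 0)
  have htail := prod_sub_ne_zero_of_norm_lt fun k => hz' (Fin.succ k)
  simp only [Fin.prod_univ_succ, Fin.tail] at htail ⊢
  field_simp
  ring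

theorem circleIntegral_pow_div_prod_sub_eq_sum {j : ℕ} (m : ℕ) {ξ : Fin (j + 2) → ℂ} {R : ℝ}
    (hR : ∀ k, ‖ξ k‖ < R) :
    (∮ ζ in C(0, R), ζ ^ (j + 1 + m) / ∏ k, (ζ - ξ k)) =
      ∑ ab ∈ antidiagonal m,
        ξ 0 ^ ab.1 * ∮ ζ in C(0, R), ζ ^ (j + ab.2) / ∏ k, (ζ - Fin.tail ξ k) := by
  induction m with
  | zero =>
    rw [add_zero, circleIntegral_pow_succ_div_prod_sub j hR,
      circleIntegral_pow_div_prod_sub_eq_zero (by simp) hR]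
    simp
  | succ m ih =>
    rw [← add_assoc, circleIntegral_pow_succ_div_prod_sub _ hR, ih, Nat.sum_antidiagonal_succ,
      mul_sum, show j + 1 + m = j + (m + 1) by omega]
    simp only [pow_zero, one_mul, pow_succ, mul_assoc, mul_left_comm (ξ 0)]

theorem circleIntegral_pow_div_prod_sub_eq_completeHomogeneous (j m : ℕ) {ξ : Fin (j + 1) → ℂ}
    {R : ℝ} (hR : ∀ k, ‖ξ k‖ < R) :
    (∮ ζ in C(0, R), ζ ^ (j + m) / ∏ k, (ζ - ξ k)) =
      2 * π * Complex.I * completeHomogeneous m ξ := by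
  induction j generalizing m with
  | zero => simpa [completeHomogeneous_one] using circleIntegral_pow_div_sub m (hR 0)
  | succ j ih =>
    rw [circleIntegral_pow_div_prod_sub_eq_sum m hR, completeHomogeneous_succ, mul_sum]
    refine sum_congr rfl fun ab _ => ?_
    rw [ih ab.2 (ξ := Fin.tail ξ) fun k => hR k.succ]
    ring

/-- Cauchy integral representation of the complete homogeneous symmetric
polynomial: for `R` larger than the modulus of every `ξ_k`,
`(1/(2πi)) ∮_{|ζ|=R} ζ^{j−1+m} / ∏ₖ (ζ − ξₖ) dζ = h_m(ξ₁, …, ξ_j)`,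
the contour being the counterclockwise circle of radius `R` about `0`. -/
theorem cauchy_complete_homogeneous (j : ℕ) (hj : 1 ≤ j) (m : ℕ) (ξ : Fin j → ℂ)
    (R : ℝ) (hR : ∀ k, ‖ξ k‖ < R) :
    (1 / (2 * (Real.pi : ℂ) * Complex.I)) *
      (∮ ζ in C((0 : ℂ), R), ζ ^ (j - 1 + m) / ∏ k : Fin j, (ζ - ξ k))
    = ∑ l ∈ Finset.Nat.antidiagonalTuple j m, ∏ i : Fin j, ξ i ^ l i := by
  obtain ⟨n, rfl⟩ : ∃ n, j = n + 1 := ⟨j - 1, by omega⟩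
  rw [Nat.add_sub_cancel, circleIntegral_pow_div_prod_sub_eq_completeHomogeneous n m hR, one_div,
    inv_mul_cancel_left₀ Complex.two_pi_I_ne_zero]
  rfl
end
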